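/- arXiv:1803.03118 — 2 statements merged into one kernel-verified Lean document; each statement's English description precedes it below -/
import Mathlib

section
/- Let n ≥ 2 be an integer, λ = (n-1)/2, ê = (1,0,…,0) ∈ ℝ^{n+1}, m ∈ ℕ₀, r > 0 and x ∈ ℝ^{n+1} with x ≠ rê. Then the m-th derivative in r of the function r ↦ (|x|² - 2r⟨x,ê⟩ + r²)^{-λ} equals m! · C_m^λ(cos χ) / |x - rê|^{m+2λ}, where cos χ = ⟨x - rê, ê⟩ / |x - rê|. -/
open Real MeasureTheory Set Filter
open scoped RealInnerProductSpace BigOperators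

noncomputable def lamb (n : ℕ) : ℝ := ((n : ℝ) - 1) / 2

noncomputable def gegenbauer (lam : ℝ) (l : ℕ) (t : ℝ) : ℝ :=
  ∑ k ∈ Finset.range (l / 2 + 1),
    (-1 : ℝ) ^ k * Real.Gamma ((l : ℝ) - (k : ℝ) + lam) /
      (Real.Gamma lam * (Nat.factorial k : ℝ) * (Nat.factorial (l - 2 * k) : ℝ)) *
      (2 * t) ^ (l - 2 * k)

noncomputable def sigmaN (n : ℕ) : ℝ := 2 * Real.pi ^ (lamb n + 1) / Real.Gamma (lamb n + 1)

noncomputable def pw (n : ℕ) (a : ℝ) (m : ℕ) (t : ℝ) : ℝ :=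
  (1 / sigmaN n) * ∑' l : ℕ, ((lamb n + l) / lamb n) * (a * l) ^ m * Real.exp (-(a * l)) *
    gegenbauer (lamb n) l t

/-! With `Q s = A - 2 s u + s ^ 2` and `w s = 2 (u - s)` one has `Q' = -w` and `w' = -2`, so
differentiating `w ^ j * Q ^ (-(λ + j + k))` gives `(λ + j + k) w ^ (j + 1) Q ^ (-(λ + j + k + 1))`
minus `2 j w ^ (j - 1) Q ^ (-(λ + j + k))`: one term raises `j`, the other trades one power of `w`
for a step in `k`. The Gegenbauer coefficients obey exactly the matching two-term recurrence, so
by induction the `m`-th derivative of `Q ^ (-λ)` is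
`m! ∑ₖ c_{m,k} w ^ (m - 2k) Q ^ (-(λ + m - k))`, and when `Q = N ^ 2` this sum is
`N ^ (-(m + 2λ)) C_m^λ((u - s) / N)`. -/

open Finset

-- Extended by zero for `l < 2 k`, so that sums may run over `range (l + 1)` and the recurrences
-- below need no boundary cases.
noncomputable def gegenbauerCoeff (lam : ℝ) (l k : ℕ) : ℝ :=
  if 2 * k ≤ l then
    (-1 : ℝ) ^ k * Real.Gamma ((l : ℝ) - (k : ℝ) + lam) /
      (Real.Gamma lam * (Nat.factorial k : ℝ) * (Nat.factorial (l - 2 * k) : ℝ))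
  else 0

theorem gegenbauerCoeff_of_lt {lam : ℝ} {l k : ℕ} (h : l < 2 * k) :
    gegenbauerCoeff lam l k = 0 :=
  if_neg (by omega)

theorem gegenbauer_eq_sum_range (lam : ℝ) (l : ℕ) (t : ℝ) :
    gegenbauer lam l t =
      ∑ k ∈ range (l + 1), gegenbauerCoeff lam l k * (2 * t) ^ (l - 2 * k) := by
  refine Finset.sum_subset_zero_on_sdiff (by gcongr; omega) (fun k hk => ?_) (fun k hk => ?_)
  · rw [Finset.mem_sdiff, Finset.mem_range, Finset.mem_range] at hk
    rw [gegenbauerCoeff_of_lt (by omega), zero_mul]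
  · rw [gegenbauerCoeff, if_pos (by rw [Finset.mem_range] at hk; omega)]

theorem gegenbauerCoeff_zero (lam : ℝ) (hlam : Real.Gamma lam ≠ 0) :
    gegenbauerCoeff lam 0 0 = 1 := by
  simp [gegenbauerCoeff, hlam]

theorem succ_mul_gegenbauerCoeff_succ_zero {lam : ℝ} (hlam : 0 < lam) (m : ℕ) :
    ((m : ℝ) + 1) * gegenbauerCoeff lam (m + 1) 0 = (lam + m) * gegenbauerCoeff lam m 0 := by
  have hΓ : Real.Gamma ((m : ℝ) + lam + 1) = ((m : ℝ) + lam) * Real.Gamma ((m : ℝ) + lam) :=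
    Real.Gamma_add_one (by positivity)
  simp only [gegenbauerCoeff, Nat.zero_le, if_true, mul_zero, Nat.sub_zero, Nat.cast_zero,
    sub_zero, Nat.cast_succ, Nat.factorial_succ, Nat.cast_mul]
  rw [show (m : ℝ) + 1 + lam = (m : ℝ) + lam + 1 by ring, hΓ]
  have := (Real.Gamma_pos_of_pos hlam).ne'
  field_simp
  ring

theorem succ_mul_gegenbauerCoeff_succ_succ {lam : ℝ} (hlam : 0 < lam) (m k : ℕ) :
    ((m : ℝ) + 1) * gegenbauerCoeff lam (m + 1) (k + 1) =
      (lam + m - (k + 1)) * gegenbauerCoeff lam m (k + 1)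
        - 2 * ((m - 2 * k : ℕ) : ℝ) * gegenbauerCoeff lam m k := by
  have hΓ := (Real.Gamma_pos_of_pos hlam).ne'
  rcases lt_or_ge (2 * k + 1) m with h | h
  · obtain ⟨j, rfl⟩ : ∃ j, m = 2 * k + 2 + j := ⟨m - (2 * k + 2), by omega⟩
    have hΓ' : Real.Gamma ((k : ℝ) + j + lam + 1 + 1) =
        ((k : ℝ) + j + lam + 1) * Real.Gamma ((k : ℝ) + j + lam + 1) :=
      Real.Gamma_add_one (by positivity)
    simp only [gegenbauerCoeff, if_pos (show 2 * (k + 1) ≤ 2 * k + 2 + j + 1 by omega),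
      if_pos (show 2 * (k + 1) ≤ 2 * k + 2 + j by omega),
      if_pos (show 2 * k ≤ 2 * k + 2 + j by omega),
      show 2 * k + 2 + j + 1 - 2 * (k + 1) = j + 1 by omega,
      show 2 * k + 2 + j - 2 * (k + 1) = j by omega, show 2 * k + 2 + j - 2 * k = j + 2 by omega]
    push_cast
    rw [show (2 * k + 2 + j + 1 : ℝ) - (k + 1) + lam = (k : ℝ) + j + lam + 1 + 1 by ring,
      show (2 * k + 2 + j : ℝ) - (k + 1) + lam = (k : ℝ) + j + lam + 1 by ring,
      show (2 * k + 2 + j : ℝ) - k + lam = (k : ℝ) + j + lam + 1 + 1 by ring, hΓ']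
    simp only [Nat.factorial_succ]
    push_cast
    field_simp
    ring
  · rcases h.eq_or_lt with h | h
    · subst h
      simp only [gegenbauerCoeff, if_pos (show 2 * (k + 1) ≤ 2 * k + 1 + 1 by omega),
        if_neg (show ¬ 2 * (k + 1) ≤ 2 * k + 1 by omega),
        if_pos (show 2 * k ≤ 2 * k + 1 by omega),
        show 2 * k + 1 + 1 - 2 * (k + 1) = 0 by omega, show 2 * k + 1 - 2 * k = 1 by omega]
      push_cast
      rw [show (2 * k + 1 + 1 : ℝ) - (k + 1) + lam = (2 * k + 1 : ℝ) - k + lam by ring]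
      simp only [Nat.factorial_succ, Nat.factorial_zero]
      push_cast
      field_simp
      ring
    · rw [gegenbauerCoeff_of_lt (by omega), gegenbauerCoeff_of_lt (by omega),
        show m - 2 * k = 0 by omega]
      simp

theorem gegenbauerCoeff_mul_pow_mul_self (lam : ℝ) (m k : ℕ) (w : ℝ) :
    gegenbauerCoeff lam m k * (w ^ (m - 2 * k) * w) =
      gegenbauerCoeff lam m k * w ^ (m + 1 - 2 * k) := by
  rcases le_or_gt (2 * k) m with h | h
  · rw [show m + 1 - 2 * k = m - 2 * k + 1 by omega, pow_succ]
  · rw [gegenbauerCoeff_of_lt h, zero_mul, zero_mul]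

theorem sum_range_sub_eq_sum_range_succ {M : Type*} [AddCommGroup M] (P R D : ℕ → M) (n : ℕ)
    (h0 : D 0 = P 0) (hsucc : ∀ k, D (k + 1) = P (k + 1) - R k) (hlast : P (n + 1) = 0) :
    ∑ k ∈ range (n + 1), (P k - R k) = ∑ k ∈ range (n + 2), D k := by
  have hP : ∑ k ∈ range (n + 1), P (k + 1) = ∑ k ∈ range n, P (k + 1) := by
    rw [sum_range_succ, hlast, add_zero]
  rw [sum_range_succ' D, h0, sum_sub_distrib, sum_range_succ' P]
  simp only [hsucc, sum_sub_distrib, hP]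
  abel

theorem sum_gegenbauerCoeff_recurrence {lam : ℝ} (hlam : 0 < lam) (m : ℕ) (w q : ℝ) :
    ∑ k ∈ range (m + 1), gegenbauerCoeff lam m k *
        ((lam + m - k) * (w ^ (m - 2 * k) * w) * q ^ k
          - 2 * ((m - 2 * k : ℕ) : ℝ) * w ^ (m - 2 * k - 1) * q ^ (k + 1))
      = (m + 1) *
          ∑ k ∈ range (m + 2), gegenbauerCoeff lam (m + 1) k * w ^ (m + 1 - 2 * k) * q ^ k := by
  rw [mul_sum]
  simp_rw [mul_sub]
  refine sum_range_sub_eq_sum_range_succ _ _ _ m ?_ (fun k => ?_) ?_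
  · rw [← mul_assoc, ← mul_assoc, succ_mul_gegenbauerCoeff_succ_zero hlam]
    simp only [Nat.cast_zero, sub_zero, mul_zero, Nat.sub_zero, pow_succ]
    ring
  · rw [← mul_assoc, ← mul_assoc, succ_mul_gegenbauerCoeff_succ_succ hlam,
      show m + 1 - 2 * (k + 1) = m - 2 * k - 1 by omega]
    have := gegenbauerCoeff_mul_pow_mul_self lam m (k + 1) w
    rw [show m + 1 - 2 * (k + 1) = m - 2 * k - 1 by omega] at this
    push_cast
    linear_combination -(lam + m - (k + 1)) * q ^ (k + 1) * this
  · rw [gegenbauerCoeff_of_lt (by omega), zero_mul]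

noncomputable def gegenbauerField (lam A u : ℝ) (m : ℕ) (s : ℝ) : ℝ :=
  ∑ k ∈ range (m + 1), gegenbauerCoeff lam m k * (2 * (u - s)) ^ (m - 2 * k) *
    (A - 2 * s * u + s ^ 2) ^ (-(lam + m - k))

theorem hasDerivAt_gegenbauerField {lam : ℝ} (hlam : 0 < lam) (A u : ℝ) (m : ℕ) {s : ℝ}
    (hs : 0 < A - 2 * s * u + s ^ 2) :
    HasDerivAt (gegenbauerField lam A u m) ((m + 1) * gegenbauerField lam A u (m + 1) s) s := by
  have hQ : HasDerivAt (fun t => A - 2 * t * u + t ^ 2) (-(2 * (u - s))) s :=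
    (((hasDerivAt_const s A).sub (((hasDerivAt_id' s).const_mul 2).mul_const u)).add
      (hasDerivAt_pow 2 s)).congr_deriv
        (by simp only [mul_one, zero_sub, Nat.cast_ofNat, Nat.add_one_sub_one, pow_one]; ring)
  have hw : HasDerivAt (fun t => 2 * (u - t)) (-2) s := by
    simpa using ((hasDerivAt_id s).const_sub u).const_mul 2
  generalize hQs : A - 2 * s * u + s ^ 2 = Q at hs hQ
  generalize hws : 2 * (u - s) = w at hQ
  have hpow (p : ℝ) (k : ℕ) (hp : p = -(lam + m + 1) + k) :
      Q ^ p = Q ^ k * Q ^ (-(lam + m + 1)) := by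
    rw [hp, Real.rpow_add_natCast hs.ne', mul_comm]
  have hterm : ∀ k ∈ range (m + 1), HasDerivAt
      (fun t => gegenbauerCoeff lam m k * (2 * (u - t)) ^ (m - 2 * k) *
        (A - 2 * t * u + t ^ 2) ^ (-(lam + m - k)))
      (Q ^ (-(lam + m + 1)) * (gegenbauerCoeff lam m k *
        ((lam + m - k) * (w ^ (m - 2 * k) * w) * Q ^ k
          - 2 * ((m - 2 * k : ℕ) : ℝ) * w ^ (m - 2 * k - 1) * Q ^ (k + 1)))) s := fun k _ => by
    refine (((hw.fun_pow (m - 2 * k)).const_mul (gegenbauerCoeff lam m k)).mul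
      (hQ.rpow_const (p := -(lam + m - k)) (Or.inl (hQs ▸ hs.ne')))).congr_deriv ?_
    simp only [hQs, hws]
    rw [hpow (-(lam + m - k) - 1) k (by ring), hpow (-(lam + m - k)) (k + 1) (by push_cast; ring)]
    ring
  refine (HasDerivAt.fun_sum hterm).congr_deriv ?_
  rw [← mul_sum, sum_gegenbauerCoeff_recurrence hlam, gegenbauerField, hQs, hws, mul_sum, mul_sum,
    mul_sum]
  refine sum_congr rfl fun k _ => ?_
  rw [hpow (-(lam + (m + 1 : ℕ) - k)) k (by push_cast; ring)]
  ring

theorem iteratedDeriv_rpow_neg_eq_gegenbauerField {lam : ℝ} (hlam : 0 < lam) (A u : ℝ) (m : ℕ)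
    {s : ℝ} (hs : 0 < A - 2 * s * u + s ^ 2) :
    iteratedDeriv m (fun t => (A - 2 * t * u + t ^ 2) ^ (-lam)) s
      = (Nat.factorial m : ℝ) * gegenbauerField lam A u m s := by
  induction m generalizing s with
  | zero =>
    simp [gegenbauerField, gegenbauerCoeff_zero lam (Real.Gamma_pos_of_pos hlam).ne']
  | succ m ih =>
    have hpos : IsOpen {t : ℝ | 0 < A - 2 * t * u + t ^ 2} :=
      isOpen_lt continuous_const (by fun_prop)
    have hnear : iteratedDeriv m (fun t => (A - 2 * t * u + t ^ 2) ^ (-lam))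
        =ᶠ[nhds s] fun t => (Nat.factorial m : ℝ) * gegenbauerField lam A u m t :=
      Filter.eventuallyEq_of_mem (hpos.mem_nhds hs) fun t ht => ih ht
    rw [iteratedDeriv_succ, hnear.deriv_eq,
      ((hasDerivAt_gegenbauerField hlam A u m hs).const_mul _).deriv, Nat.factorial_succ]
    push_cast
    ring

theorem gegenbauerField_eq_gegenbauer_div (lam A u : ℝ) (m : ℕ) {s N : ℝ} (hN : 0 < N)
    (hQ : A - 2 * s * u + s ^ 2 = N ^ 2) :
    gegenbauerField lam A u m s = gegenbauer lam m ((u - s) / N) / N ^ ((m : ℝ) + 2 * lam) := by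
  rw [gegenbauer_eq_sum_range, sum_div, gegenbauerField]
  refine sum_congr rfl fun k _ => ?_
  rcases le_or_gt (2 * k) m with hk | hk
  · rw [hQ, ← Real.rpow_natCast N 2, ← Real.rpow_mul hN.le,
      show ((2 : ℕ) : ℝ) * -(lam + m - k) = -((m : ℝ) + 2 * lam) - ((m - 2 * k : ℕ) : ℝ) by
        push_cast [Nat.cast_sub hk]; ring,
      Real.rpow_sub hN, Real.rpow_natCast, Real.rpow_neg hN.le, mul_pow, mul_pow, div_pow]
    field_simp
  · simp [gegenbauerCoeff_of_lt hk]

theorem stmt2_general (n : ℕ) (hn : 2 ≤ n) (m : ℕ) (r : ℝ)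
    (x : EuclideanSpace ℝ (Fin (n + 1)))
    (e : EuclideanSpace ℝ (Fin (n + 1))) (he : e = EuclideanSpace.single 0 1)
    (hx : x ≠ r • e) :
    iteratedDeriv m
        (fun s : ℝ => (‖x‖ ^ 2 - 2 * s * ⟪x, e⟫ + s ^ 2) ^ (-(lamb n))) r
      = (Nat.factorial m : ℝ) *
          gegenbauer (lamb n) m (⟪x - r • e, e⟫ / ‖x - r • e‖) /
          ‖x - r • e‖ ^ ((m : ℝ) + 2 * lamb n) := by
  have hlam : 0 < lamb n := by
    have : (2 : ℝ) ≤ n := by exact_mod_cast hn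
    unfold lamb; linarith
  have he₁ : ‖e‖ = 1 := by simp [he]
  have hN : 0 < ‖x - r • e‖ := norm_pos_iff.mpr (sub_ne_zero.mpr hx)
  have hQ : ‖x‖ ^ 2 - 2 * r * ⟪x, e⟫ + r ^ 2 = ‖x - r • e‖ ^ 2 := by
    rw [norm_sub_sq_real, real_inner_smul_right, norm_smul, Real.norm_eq_abs, he₁, mul_one,
      sq_abs]
    ring
  have hcos : ⟪x - r • e, e⟫ = ⟪x, e⟫ - r := by
    rw [inner_sub_left, real_inner_smul_left, real_inner_self_eq_norm_sq, he₁]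
    ring
  rw [iteratedDeriv_rpow_neg_eq_gegenbauerField hlam _ _ m (hQ ▸ by positivity),
    gegenbauerField_eq_gegenbauer_div _ _ _ m hN hQ, hcos, mul_div_assoc]

/-- the `m`-th derivative in `r` of `r ↦ (|x|²-2r⟨x,ê⟩+r²)^{-λ}` equals
`m! C_m^λ(cos χ)/|x-rê|^{m+2λ}` with `cos χ = ⟨x-rê,ê⟩/|x-rê|`. -/
theorem stmt2 (n : ℕ) (hn : 2 ≤ n) (m : ℕ) (r : ℝ) (hr : 0 < r)
    (x : EuclideanSpace ℝ (Fin (n + 1)))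
    (e : EuclideanSpace ℝ (Fin (n + 1))) (he : e = EuclideanSpace.single 0 1)
    (hx : x ≠ r • e) :
    iteratedDeriv m
        (fun s : ℝ => (‖x‖ ^ 2 - 2 * s * ⟪x, e⟫ + s ^ 2) ^ (-(lamb n))) r
      = (Nat.factorial m : ℝ) *
          gegenbauer (lamb n) m (⟪x - r • e, e⟫ / ‖x - r • e‖) /
          ‖x - r • e‖ ^ ((m : ℝ) + 2 * lamb n) :=
  stmt2_general n hn m r x e he hx
end

section
/- Let n ≥ 2 be an integer, λ = (n-1)/2, m ∈ ℕ, and let g^m(t) = (1/(Σ_n λ)) · (m+1)! · C_{m+1}^λ(1/√(1+t²)) / (1+t²)^{(m+n)/2} for t ≥ 0 (the Euclidean limit of the Poisson wavelets of order m). Then g^m decays at infinity polynomially with degree m + n + ((m+1) mod 2); that is, lim_{t→∞} t^{m+n+ε} g^m(t) exists and is a nonzero real number, where ε = 1 if m is even and ε = 0 if m is odd. -/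
open Real MeasureTheory Set Filter
open scoped RealInnerProductSpace BigOperators

/-- The Euclidean limit `g^m` of the Poisson wavelets of order `m`. -/
noncomputable def euclideanLimit (n m : ℕ) (t : ℝ) : ℝ :=
  (1 / (sigmaN n * lamb n)) * (Nat.factorial (m + 1) : ℝ) *
    gegenbauer (lamb n) (m + 1) (1 / Real.sqrt (1 + t ^ 2)) /
    (1 + t ^ 2) ^ (((m : ℝ) + n) / 2)

/-! With `u = 1 / √(1 + t²)`, `g^m(t)` is a constant times `C_{m+1}^λ(u) u^(m+n)`. Since `C_l^λ` has
the parity of `l`, `C_l^λ(u) = u^(l % 2) R(u)` with `R` a polynomial whose constant term is the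
coefficient of index `⌊l/2⌋`, nonzero because `Γ` is positive at positive arguments. As `t u → 1`
and `u → 0`, `t^(m+n+ε) g^m(t)` tends to that constant times `R(0)`. -/

namespace Gegenbauer

noncomputable def coeff (lam : ℝ) (l k : ℕ) : ℝ :=
  (-1 : ℝ) ^ k * Real.Gamma ((l : ℝ) - (k : ℝ) + lam) /
    (Real.Gamma lam * (Nat.factorial k : ℝ) * (Nat.factorial (l - 2 * k) : ℝ)) * 2 ^ (l - 2 * k)

noncomputable def reduced (lam : ℝ) (l : ℕ) (u : ℝ) : ℝ :=
  ∑ k ∈ Finset.range (l / 2 + 1), coeff lam l k * u ^ (l - 2 * k - l % 2)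

theorem gegenbauer_eq_pow_mul_reduced (lam : ℝ) (l : ℕ) (u : ℝ) :
    gegenbauer lam l u = u ^ (l % 2) * reduced lam l u := by
  rw [gegenbauer, reduced, Finset.mul_sum]
  refine Finset.sum_congr rfl fun k hmem => ?_
  have hk : k ≤ l / 2 := Finset.mem_range_succ_iff.mp hmem
  have hpow : u ^ (l - 2 * k) = u ^ (l % 2) * u ^ (l - 2 * k - l % 2) := by
    rw [← pow_add]; congr 1; omega
  rw [coeff, mul_pow, hpow]
  ring

theorem continuous_reduced (lam : ℝ) (l : ℕ) : Continuous (reduced lam l) := by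
  unfold reduced; fun_prop

theorem reduced_zero (lam : ℝ) (l : ℕ) : reduced lam l 0 = coeff lam l (l / 2) := by
  rw [reduced, Finset.sum_eq_single_of_mem (l / 2) (Finset.self_mem_range_succ _)]
  · simp [show l - 2 * (l / 2) - l % 2 = 0 by omega]
  · intro k hmem _
    have hk : k ≤ l / 2 := Finset.mem_range_succ_iff.mp hmem
    simp [show l - 2 * k - l % 2 ≠ 0 by omega]

theorem coeff_ne_zero {lam : ℝ} (hlam : 0 < lam) {l k : ℕ} (hk : k ≤ l) : coeff lam l k ≠ 0 := by
  have hΓ : 0 < Real.Gamma ((l : ℝ) - (k : ℝ) + lam) := by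
    apply Real.Gamma_pos_of_pos
    have : (k : ℝ) ≤ l := by exact_mod_cast hk
    linarith
  have := Real.Gamma_pos_of_pos hlam
  rw [coeff]
  exact mul_ne_zero (div_ne_zero (mul_ne_zero (by simp) hΓ.ne') (by positivity)) (by positivity)

end Gegenbauer

open Gegenbauer

theorem lamb_pos {n : ℕ} (hn : 2 ≤ n) : 0 < lamb n := by
  have : (2 : ℝ) ≤ n := by exact_mod_cast hn
  rw [lamb]; linarith

theorem sigmaN_pos (n : ℕ) : 0 < sigmaN n := by
  have hΓ : 0 < Real.Gamma (lamb n + 1) := by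
    apply Real.Gamma_pos_of_pos
    rw [lamb]
    linarith [(Nat.cast_nonneg n : (0 : ℝ) ≤ n)]
  rw [sigmaN]
  exact div_pos (mul_pos two_pos (Real.rpow_pos_of_pos Real.pi_pos _)) hΓ

theorem continuous_one_div_sqrt_one_add_sq : Continuous (fun x : ℝ => 1 / √(1 + x ^ 2)) :=
  continuous_const.div (by fun_prop) fun x => (Real.sqrt_pos.2 (by positivity)).ne'

theorem mul_one_div_sqrt_one_add_sq {t : ℝ} (ht : 0 < t) :
    t * (1 / √(1 + t ^ 2)) = 1 / √(1 + t⁻¹ ^ 2) := by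
  have h : 1 + t ^ 2 = t ^ 2 * (1 + t⁻¹ ^ 2) := by field_simp; ring
  rw [h, Real.sqrt_mul (by positivity), Real.sqrt_sq ht.le]
  field_simp

theorem tendsto_one_div_sqrt_one_add_sq_atTop :
    Tendsto (fun t : ℝ => 1 / √(1 + t ^ 2)) atTop (nhds 0) := by
  refine Tendsto.div_atTop tendsto_const_nhds ?_
  refine Real.tendsto_sqrt_atTop.comp (tendsto_atTop_add_const_left _ _ ?_)
  exact tendsto_pow_atTop two_ne_zero

theorem tendsto_mul_one_div_sqrt_one_add_sq_atTop :
    Tendsto (fun t : ℝ => t * (1 / √(1 + t ^ 2))) atTop (nhds 1) := by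
  have h := (continuous_one_div_sqrt_one_add_sq.tendsto 0).comp tendsto_inv_atTop_zero
  rw [show (1 : ℝ) / √(1 + 0 ^ 2) = 1 by norm_num] at h
  refine h.congr' ?_
  filter_upwards [eventually_gt_atTop 0] with t ht
  exact (mul_one_div_sqrt_one_add_sq ht).symm

theorem pow_mul_euclideanLimit (n m : ℕ) (t : ℝ) :
    t ^ (m + n + (m + 1) % 2) * euclideanLimit n m t =
      1 / (sigmaN n * lamb n) * (Nat.factorial (m + 1) : ℝ) *
        (t * (1 / √(1 + t ^ 2))) ^ (m + n + (m + 1) % 2) *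
        reduced (lamb n) (m + 1) (1 / √(1 + t ^ 2)) := by
  have hsqrt : (1 + t ^ 2) ^ (((m : ℝ) + n) / 2) = √(1 + t ^ 2) ^ (m + n) := by
    rw [Real.rpow_div_two_eq_sqrt _ (by positivity), ← Nat.cast_add, Real.rpow_natCast]
  rw [euclideanLimit, gegenbauer_eq_pow_mul_reduced, hsqrt, mul_pow, pow_add, div_pow, div_pow,
    one_pow]
  ring

theorem stmt13_general (n m : ℕ) (hn : 2 ≤ n) :
    ∃ L : ℝ, L ≠ 0 ∧
      Tendsto (fun t : ℝ => t ^ (m + n + (m + 1) % 2) * euclideanLimit n m t)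
        atTop (nhds L) := by
  set C : ℝ := 1 / (sigmaN n * lamb n) * (Nat.factorial (m + 1) : ℝ)
  have hC : C ≠ 0 := by
    have := sigmaN_pos n
    have := lamb_pos hn
    positivity
  refine ⟨C * coeff (lamb n) (m + 1) ((m + 1) / 2),
    mul_ne_zero hC (coeff_ne_zero (lamb_pos hn) (Nat.div_le_self _ _)), ?_⟩
  simp_rw [pow_mul_euclideanLimit]
  have hlim := (tendsto_const_nhds (x := C)).mul
    (tendsto_mul_one_div_sqrt_one_add_sq_atTop.pow (m + n + (m + 1) % 2)) |>.mul
    (((continuous_reduced (lamb n) (m + 1)).tendsto 0).comp tendsto_one_div_sqrt_one_add_sq_atTop)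
  rw [one_pow, mul_one, reduced_zero] at hlim
  exact hlim

/-- `g^m` decays at infinity polynomially with degree
`m + n + ((m+1) mod 2)`. -/
theorem stmt13 (n m : ℕ) (hn : 2 ≤ n) (hm : 1 ≤ m) :
    ∃ L : ℝ, L ≠ 0 ∧
      Tendsto (fun t : ℝ => t ^ (m + n + (m + 1) % 2) * euclideanLimit n m t)
        atTop (nhds L) :=
  stmt13_general n m hn
end
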